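/- Let R be an integral domain containing a polynomial subring F_T = C[T_0, T_1, T_2, ...] (the T_i algebraically independent), let S be the multiplicative set generated by a single variable T of F_T, and suppose α ∈ S^{-1} F_T ⊂ Frac(R) has the property that α ∈ R and, moreover, for every nonzero β ∈ F_T not divisible by T, the element β is not contained in the ideal of R generated by T. Then α ∈ F_T. Concretely (as in the paper): if ω ∈ P^{A_+} and τ^h_0 · ω ∈ P_τ, then ω ∈ P_τ, where P_τ ⊂ P is the polynomial subring generated by the algebraically independent elements τ^u_k and τ^h_0 is one of its generators. -/

import Mathlib

open MvPolynomial

/-- Generators: `((u, true), k)` is `β^u_k`, `((u, false), k)` is `γ^{u'}_k`, `u : Fin 3` encodes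
`x, y, h` as `0, 1, 2`, and `k` is the level. -/
abbrev PGen : Type := (Fin 3 × Bool) × ℕ

abbrev Pring : Type := MvPolynomial PGen ℂ

noncomputable def Beta (u : Fin 3) (k : ℕ) : Pring := X ((u, true), k)
noncomputable def Gam (u : Fin 3) (k : ℕ) : Pring := X ((u, false), k)

/-- `c^n_k = k (k-1) ⋯ (k-n+1)`, which vanishes for `n > k` and equals `1` for `n = 0`. -/
noncomputable def cnk (n k : ℕ) : ℂ := (k.descFactorial n : ℂ)

/-- `v^h(n)`: `β^u_k ↦ -c^n_k β^u_{k-n}`, `γ^{u'}_k ↦ c^n_k γ^{u'}_{k-n}`. -/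
noncomputable def vH (n : ℕ) : Derivation ℂ Pring Pring :=
  mkDerivation ℂ (fun g => match g with
    | ((u, true), k) => -(cnk n k) • Beta u (k - n)
    | ((u, false), k) => (cnk n k) • Gam u (k - n))

/-- `v^x(n)`: `β^u_k ↦ -(1/2) c^n_k γ^{u'}_{k-n}`, `γ^{u'}_k ↦ 0`. -/
noncomputable def vX (n : ℕ) : Derivation ℂ Pring Pring :=
  mkDerivation ℂ (fun g => match g with
    | ((u, true), k) => (-(2⁻¹ : ℂ) * cnk n k) • Gam u (k - n)
    | ((_, false), _) => 0)

/-- `v^y(n)`: `β^u_k ↦ 0`, `γ^{u'}_k ↦ -(1/2) c^n_k β^u_{k-n}`. -/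
noncomputable def vY (n : ℕ) : Derivation ℂ Pring Pring :=
  mkDerivation ℂ (fun g => match g with
    | ((_, true), _) => 0
    | ((u, false), k) => (-(2⁻¹ : ℂ) * cnk n k) • Beta u (k - n))


noncomputable def Del : Derivation ℂ Pring Pring :=
  mkDerivation ℂ (fun g => ((g.2 + 1 : ℕ) : ℂ) • (X (g.1, g.2 + 1) : Pring))

/-- `τ^x_0 = 2 β^x_0 γ^{h'}_0 - β^h_0 γ^{y'}_0`, `τ^y_0 = -2 β^y_0 γ^{h'}_0 + β^h_0 γ^{x'}_0`,
`τ^h_0 = -2 β^x_0 γ^{x'}_0 + 2 β^y_0 γ^{y'}_0`. -/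
noncomputable def tau0 : Fin 3 → Pring :=
  ![2 * Beta 0 0 * Gam 2 0 - Beta 2 0 * Gam 1 0,
    -2 * Beta 1 0 * Gam 2 0 + Beta 2 0 * Gam 0 0,
    -2 * Beta 0 0 * Gam 0 0 + 2 * Beta 1 0 * Gam 1 0]

/-- `τ^u_k = ∂^k τ^u_0`. -/
noncomputable def tau (u : Fin 3) (k : ℕ) : Pring := (fun p => Del p)^[k] (tau0 u)

/-- The subalgebra `P_τ` generated by the `τ^u_k`. -/
noncomputable def Ptau : Subalgebra ℂ Pring :=
  Algebra.adjoin ℂ (Set.range fun p : Fin 3 × ℕ => tau p.1 p.2)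

/-- `P^{A_+}`: the polynomials annihilated by all `v^u(n)`, `u ∈ {x,y,h}`, `n ≥ 0`. -/
def AplusInv (ω : Pring) : Prop := ∀ n : ℕ, vH n ω = 0 ∧ vX n ω = 0 ∧ vY n ω = 0
open Finset in
/-- Sum of products at total level `k`. -/
noncomputable def Sq (A B : Fin 3 × Bool) (k : ℕ) : Pring :=
  ∑ j ∈ Finset.range (k + 1), (X (A, j) * X (B, k - j) : Pring)

lemma del_X (g : Fin 3 × Bool) (k : ℕ) :
    Del (X (g, k) : Pring) = ((k + 1 : ℕ) : ℂ) • (X (g, k + 1) : Pring) := by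
  simp [Del, mkDerivation_X]

open Finset in
lemma del_Sq (A B : Fin 3 × Bool) (k : ℕ) :
    Del (Sq A B k) = ((k + 1 : ℕ) : ℂ) • Sq A B (k + 1) := by
  have hterm : ∀ j ∈ range (k+1),
      Del (X (A, j) * X (B, k - j) : Pring)
        = ((k - j + 1 : ℕ) : ℂ) • (X (A, j) * X (B, k - j + 1) : Pring)
          + ((j + 1 : ℕ) : ℂ) • (X (A, j + 1) * X (B, k - j) : Pring) := by
    intro j _
    rw [Derivation.leibniz, del_X, del_X]
    simp only [smul_eq_mul, smul_eq_C_mul]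
    ring
  rw [Sq, map_sum, Finset.sum_congr rfl hterm, Finset.sum_add_distrib]
  have h1 : (∑ j ∈ range (k+1), ((k - j + 1 : ℕ) : ℂ) • (X (A, j) * X (B, k - j + 1) : Pring))
      = ∑ j ∈ range (k+2), ((k + 1 - j : ℕ) : ℂ) • (X (A, j) * X (B, k + 1 - j) : Pring) := by
    rw [Finset.sum_range_succ
      (fun j => ((k + 1 - j : ℕ) : ℂ) • (X (A, j) * X (B, k + 1 - j) : Pring)) (k+1)]
    simp only [Nat.sub_self, Nat.cast_zero, zero_smul, add_zero]
    refine Finset.sum_congr rfl ?_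
    intro j hj
    have hj' : j ≤ k := by simpa [Nat.lt_succ_iff] using hj
    have e1 : k - j + 1 = k + 1 - j := by omega
    rw [e1]
  have h2 : (∑ j ∈ range (k+1), ((j + 1 : ℕ) : ℂ) • (X (A, j + 1) * X (B, k - j) : Pring))
      = ∑ j ∈ range (k+2), ((j : ℕ) : ℂ) • (X (A, j) * X (B, k + 1 - j) : Pring) := by
    rw [Finset.sum_range_succ' (fun j => ((j : ℕ) : ℂ) • (X (A, j) * X (B, k + 1 - j) : Pring)) (k+1)]
    simp only [Nat.cast_zero, zero_smul, add_zero, Nat.cast_add, Nat.cast_one]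
    refine Finset.sum_congr rfl ?_
    intro j hj
    have e1 : k + 1 - (j + 1) = k - j := by omega
    rw [e1]
  rw [h1, h2, ← Finset.sum_add_distrib, Sq, Finset.smul_sum]
  refine Finset.sum_congr rfl ?_
  intro j hj
  have hj' : j ≤ k + 1 := by simpa [Nat.lt_succ_iff] using hj
  rw [← add_smul]
  congr 1
  have e2 : (k + 1 - j) + j = k + 1 := by omega
  calc ((k + 1 - j : ℕ) : ℂ) + (j : ℂ) = (((k + 1 - j) + j : ℕ) : ℂ) := by push_cast; ring
    _ = ((k+1 : ℕ) : ℂ) := by rw [e2]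

lemma delIter_XX (A B : Fin 3 × Bool) (k : ℕ) :
    (Del.toLinearMap ^ k) (X (A, 0) * X (B, 0) : Pring)
      = (k.factorial : ℂ) • Sq A B k := by
  induction k with
  | zero => simp [Sq]
  | succ k ih =>
    rw [pow_succ', Module.End.mul_apply, ih]
    have h3 : (Del.toLinearMap : Pring →ₗ[ℂ] Pring) ((k.factorial : ℂ) • Sq A B k)
        = (k.factorial : ℂ) • Del (Sq A B k) := by
      rw [map_smul]; rfl
    rw [h3, del_Sq, smul_smul, Nat.factorial_succ]
    push_cast
    ring_nf
set_option synthInstance.maxHeartbeats 1000000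
set_option maxHeartbeats 1000000

/-- The fraction field of the target polynomial ring `ℂ[X_{u,k}]`. -/
noncomputable abbrev KK : Type := FractionRing (MvPolynomial (Fin 3 × ℕ) ℂ)

noncomputable def xv (p : Fin 3 × ℕ) : KK := algebraMap (MvPolynomial (Fin 3 × ℕ) ℂ) KK (X p)

noncomputable def sc (c : ℂ) : KK := algebraMap ℂ KK c

lemma xv_ne_zero (p : Fin 3 × ℕ) : xv p ≠ 0 := by
  intro h
  have := (map_eq_zero_iff _ (IsFractionRing.injective (MvPolynomial (Fin 3 × ℕ) ℂ) KK)).1 h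
  exact MvPolynomial.X_ne_zero _ this

lemma sc_ne_zero {c : ℂ} (hc : c ≠ 0) : sc c ≠ 0 := fun h =>
  hc ((algebraMap ℂ KK).injective (by simpa [sc] using h))

/-- recursive values assigned to `γ^{x'}_k`. -/
noncomputable def cg : ℕ → KK
  | 0 => 0
  | (k+1) =>
      ((sc (-2 * ((k+1).factorial : ℂ)))⁻¹ * xv (2, k+1)
        - ∑ j ∈ Finset.range (k+1), (sc (((j+1).factorial : ℂ)))⁻¹ * xv (0, j+1) * cg (k - j))
      / xv (0, 0)
  decreasing_by exact Nat.lt_succ_of_le (Nat.sub_le _ _)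

/-- The substitution `P → KK`. -/
noncomputable def vmap : PGen → KK := fun g =>
  match g with
  | ((u, true), k) =>
      if u = 0 then (sc ((k.factorial : ℂ)))⁻¹ * xv (0, k)
      else if u = 1 then -((sc ((k.factorial : ℂ)))⁻¹ * xv (1, k))
      else 0
  | ((u, false), k) =>
      if u = 0 then cg k
      else if u = 2 then (if k = 0 then (sc 2)⁻¹ else 0)
      else 0

noncomputable def psi : Pring →ₐ[ℂ] KK := aeval vmap

lemma psi_C_mul (a : ℂ) (p : Pring) : psi (C a * p) = sc a * psi p := by
  simp [psi, sc]

lemma delIter_C_mul (c : ℂ) (p : Pring) (k : ℕ) :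
    (Del.toLinearMap ^ k) (C c * p) = C c * (Del.toLinearMap ^ k) p := by
  rw [← smul_eq_C_mul, ← smul_eq_C_mul, map_smul]
lemma delIter_XX' (A B : Fin 3 × Bool) (k : ℕ) :
    (Del.toLinearMap ^ k) (X (A, 0) * X (B, 0) : Pring)
      = C (k.factorial : ℂ) * Sq A B k := by
  rw [delIter_XX, smul_eq_C_mul]

open Finset in
lemma psi_Sq (A B : Fin 3 × Bool) (k : ℕ) :
    psi (Sq A B k) = ∑ j ∈ Finset.range (k+1), vmap (A, j) * vmap (B, k - j) := by
  simp [psi, Sq]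

open Finset in
lemma psi_Sq_bx_gh (k : ℕ) :
    psi (Sq (0, true) (2, false) k) = (sc ((k.factorial : ℂ)))⁻¹ * xv (0, k) * (sc 2)⁻¹ := by
  rw [psi_Sq]
  rw [Finset.sum_eq_single k]
  · have h : k - k = 0 := Nat.sub_self k
    simp [vmap, h]
  · intro j hj hne
    have : k - j ≠ 0 := by simp [Nat.lt_succ_iff] at hj; omega
    simp [vmap, this]
  · intro hk; exact absurd (self_mem_range_succ k) hk

open Finset in
lemma psi_Sq_by_gh (k : ℕ) :
    psi (Sq (1, true) (2, false) k) = -((sc ((k.factorial : ℂ)))⁻¹ * xv (1, k) * (sc 2)⁻¹) := by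
  rw [psi_Sq]
  rw [Finset.sum_eq_single k]
  · have h : k - k = 0 := Nat.sub_self k
    simp [vmap, h]
  · intro j hj hne
    have : k - j ≠ 0 := by simp [Nat.lt_succ_iff] at hj; omega
    simp [vmap, this]
  · intro hk; exact absurd (self_mem_range_succ k) hk

lemma psi_Sq_bh (B : Fin 3 × Bool) (k : ℕ) :
    psi (Sq (2, true) B k) = 0 := by
  rw [psi_Sq]
  refine Finset.sum_eq_zero fun j _ => ?_
  simp [vmap]

lemma psi_Sq_by_gy (k : ℕ) :
    psi (Sq (1, true) (1, false) k) = 0 := by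
  rw [psi_Sq]
  refine Finset.sum_eq_zero fun j _ => ?_
  simp [vmap]

/-- `E_k`. -/
noncomputable def Ek (k : ℕ) : KK :=
  ∑ j ∈ Finset.range (k+1), (sc ((j.factorial : ℂ)))⁻¹ * xv (0, j) * cg (k - j)

lemma psi_Sq_bx_gx (k : ℕ) :
    psi (Sq (0, true) (0, false) k) = Ek k := by
  rw [psi_Sq, Ek]
  refine Finset.sum_congr rfl fun j _ => ?_
  simp [vmap]
lemma Ek_zero : Ek 0 = 0 := by
  simp [Ek, cg]

lemma Ek_succ (k : ℕ) : Ek (k+1) = (sc (-2 * (((k+1).factorial : ℂ))))⁻¹ * xv (2, k+1) := by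
  have hx : xv (0, 0) ≠ 0 := xv_ne_zero _
  rw [Ek, Finset.sum_range_succ']
  have h0 : (sc (((0:ℕ).factorial : ℂ)))⁻¹ * xv (0, 0) * cg (k + 1 - 0) = xv (0,0) * cg (k+1) := by
    simp [sc]
  rw [h0]
  have hS : ∀ j ∈ Finset.range (k+1),
      (sc (((j+1).factorial : ℂ)))⁻¹ * xv (0, j+1) * cg (k + 1 - (j+1))
        = (sc (((j+1).factorial : ℂ)))⁻¹ * xv (0, j+1) * cg (k - j) := by
    intro j _
    congr 2
    omega
  rw [Finset.sum_congr rfl hS]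
  have hcg : cg (k+1) = ((sc (-2 * ((k+1).factorial : ℂ)))⁻¹ * xv (2, k+1)
      - ∑ j ∈ Finset.range (k+1), (sc (((j+1).factorial : ℂ)))⁻¹ * xv (0, j+1) * cg (k - j))
      / xv (0, 0) := by
    rw [cg]
  rw [hcg, mul_comm, div_mul_cancel₀ _ hx]
  ring

lemma sc_mul (a b : ℂ) : sc (a * b) = sc a * sc b := by simp [sc]
lemma sc_two : sc 2 = 2 := by simp [sc, map_ofNat]
lemma sc_neg_two : sc (-2) = -2 := by rw [show (-2:ℂ) = -(2) from rfl]; simp [sc, map_ofNat]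

lemma tau_pow (u : Fin 3) (k : ℕ) : tau u k = (Del.toLinearMap ^ k) (tau0 u) := by
  rw [tau, Module.End.pow_apply]
  rfl

lemma tau0_exp0 : tau0 0 = C (2:ℂ) * (X (((0:Fin 3), true), 0) * X (((2:Fin 3), false), 0) : Pring)
    + C (-1:ℂ) * (X (((2:Fin 3), true), 0) * X (((1:Fin 3), false), 0) : Pring) := by
  have h : tau0 0 = 2 * Beta 0 0 * Gam 2 0 - Beta 2 0 * Gam 1 0 := rfl
  rw [h]
  simp [Beta, Gam, map_ofNat]
  ring

lemma tau0_exp1 : tau0 1 = C (-2:ℂ) * (X (((1:Fin 3), true), 0) * X (((2:Fin 3), false), 0) : Pring)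
    + C (1:ℂ) * (X (((2:Fin 3), true), 0) * X (((0:Fin 3), false), 0) : Pring) := by
  have h : tau0 1 = -2 * Beta 1 0 * Gam 2 0 + Beta 2 0 * Gam 0 0 := rfl
  rw [h]
  simp [Beta, Gam, map_ofNat, map_neg]
  ring

lemma tau0_exp2 : tau0 2 = C (-2:ℂ) * (X (((0:Fin 3), true), 0) * X (((0:Fin 3), false), 0) : Pring)
    + C (2:ℂ) * (X (((1:Fin 3), true), 0) * X (((1:Fin 3), false), 0) : Pring) := by
  have h : tau0 2 = -2 * Beta 0 0 * Gam 0 0 + 2 * Beta 1 0 * Gam 1 0 := rfl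
  rw [h]
  simp [Beta, Gam, map_ofNat, map_neg]
  ring

lemma psi_tau0 (k : ℕ) : psi (tau 0 k) = xv (0, k) := by
  have hk : sc (k.factorial : ℂ) ≠ 0 :=
    sc_ne_zero (Nat.cast_ne_zero.2 (Nat.factorial_ne_zero k))
  have h2 : sc 2 ≠ 0 := sc_ne_zero two_ne_zero
  rw [tau_pow, tau0_exp0, map_add, delIter_C_mul, delIter_C_mul, delIter_XX', delIter_XX',
    map_add, psi_C_mul, psi_C_mul, psi_C_mul, psi_C_mul,
    psi_Sq_bx_gh, psi_Sq_bh, mul_zero, mul_zero, add_zero]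
  rw [sc_two]
  field_simp

lemma psi_tau1 (k : ℕ) : psi (tau 1 k) = xv (1, k) := by
  have hk : sc (k.factorial : ℂ) ≠ 0 :=
    sc_ne_zero (Nat.cast_ne_zero.2 (Nat.factorial_ne_zero k))
  have h2 : sc 2 ≠ 0 := sc_ne_zero two_ne_zero
  rw [tau_pow, tau0_exp1, map_add, delIter_C_mul, delIter_C_mul, delIter_XX', delIter_XX',
    map_add, psi_C_mul, psi_C_mul, psi_C_mul, psi_C_mul,
    psi_Sq_by_gh, psi_Sq_bh, mul_zero, mul_zero, add_zero]
  rw [sc_neg_two, sc_two]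
  have h2' : (2:KK) ≠ 0 := by rw [← sc_two]; exact h2
  field_simp

lemma psi_tau2 (k : ℕ) : psi (tau 2 k) = if k = 0 then 0 else xv (2, k) := by
  rw [tau_pow, tau0_exp2, map_add, delIter_C_mul, delIter_C_mul, delIter_XX', delIter_XX',
    map_add, psi_C_mul, psi_C_mul, psi_C_mul, psi_C_mul,
    psi_Sq_bx_gx, psi_Sq_by_gy, mul_zero, mul_zero, add_zero]
  cases k with
  | zero => simp [Ek_zero]
  | succ k =>
    have hne : sc (-2 * (((k+1).factorial : ℂ))) ≠ 0 := by
      refine sc_ne_zero ?_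
      have : ((k+1).factorial : ℂ) ≠ 0 := Nat.cast_ne_zero.2 (Nat.factorial_ne_zero _)
      simp [this]
    rw [Ek_succ, if_neg (Nat.succ_ne_zero k)]
    have hfac : sc (((k+1).factorial : ℂ)) ≠ 0 :=
      sc_ne_zero (Nat.cast_ne_zero.2 (Nat.factorial_ne_zero _))
    rw [sc_mul] at hne ⊢
    rw [sc_neg_two] at hne ⊢
    field_simp
/-- Substitution killing `X (2,0)`. -/
noncomputable def sigma : MvPolynomial (Fin 3 × ℕ) ℂ →ₐ[ℂ] MvPolynomial (Fin 3 × ℕ) ℂ :=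
  aeval (fun p => if p = ((2:Fin 3), (0:ℕ)) then 0 else X p)

lemma X_dvd_sub_sigma (F : MvPolynomial (Fin 3 × ℕ) ℂ) :
    (X ((2:Fin 3), (0:ℕ)) : MvPolynomial (Fin 3 × ℕ) ℂ) ∣ F - sigma F := by
  induction F using MvPolynomial.induction_on with
  | C a => simp [sigma]
  | add p q hp hq =>
    have e : p + q - sigma (p + q) = (p - sigma p) + (q - sigma q) := by
      rw [map_add]; ring
    rw [e]; exact dvd_add hp hq
  | mul_X p n hp =>
    rw [map_mul, show sigma (X n) = if n = ((2:Fin 3), (0:ℕ)) then 0 else X n from aeval_X _ n]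
    by_cases hn : n = ((2:Fin 3), (0:ℕ))
    · subst hn
      rw [if_pos rfl, mul_zero, sub_zero]
      exact dvd_mul_left _ _
    · rw [if_neg hn]
      have e : p * X n - sigma p * X n = (p - sigma p) * X n := by ring
      rw [e]
      exact hp.mul_right _

lemma aeval_xv_eq (F : MvPolynomial (Fin 3 × ℕ) ℂ) :
    aeval xv F = algebraMap (MvPolynomial (Fin 3 × ℕ) ℂ) KK F := by
  have e : (aeval xv : MvPolynomial (Fin 3 × ℕ) ℂ →ₐ[ℂ] KK)
      = (IsScalarTower.toAlgHom ℂ (MvPolynomial (Fin 3 × ℕ) ℂ) KK) := by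
    apply MvPolynomial.algHom_ext
    intro p
    simp [xv]
  rw [e]
  rfl

lemma psi_aeval_T (F : MvPolynomial (Fin 3 × ℕ) ℂ) :
    psi (aeval (fun p : Fin 3 × ℕ => tau p.1 p.2) F) = aeval xv (sigma F) := by
  have h1 : psi.comp (aeval fun p : Fin 3 × ℕ => tau p.1 p.2)
      = (aeval xv).comp sigma := by
    apply MvPolynomial.algHom_ext
    intro p
    obtain ⟨u, k⟩ := p
    simp only [AlgHom.comp_apply, aeval_X]
    rw [show sigma (X (u, k)) = if (u,k) = ((2:Fin 3), (0:ℕ)) then 0 else X (u,k) from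
      aeval_X _ (u,k)]
    by_cases hp : (u, k) = ((2:Fin 3), (0:ℕ))
    · rw [if_pos hp, map_zero]
      obtain ⟨hu, hk⟩ := Prod.mk.injEq .. ▸ hp
      subst hu; subst hk
      simpa using psi_tau2 0
    · rw [if_neg hp, aeval_X]
      fin_cases u
      · exact psi_tau0 k
      · exact psi_tau1 k
      · have hk : k ≠ 0 := fun hk => hp (by simp [hk])
        simpa [hk] using psi_tau2 k
  have := congrArg (fun (g : MvPolynomial (Fin 3 × ℕ) ℂ →ₐ[ℂ] KK) => g F) h1
  simpa using this

lemma tau20_ne : (tau 2 0 : Pring) ≠ 0 := by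
  intro h
  have h1 : tau 2 0 = -2 * Beta 0 0 * Gam 0 0 + 2 * Beta 1 0 * Gam 1 0 := rfl
  classical
  have := congrArg (eval (fun g : PGen => if g.1.1 = 1 then (1:ℂ) else 0)) h
  rw [h1] at this
  simp [Beta, Gam] at this
/-- Corollary 4.13 of the paper: if `ω ∈ P^{A_+}` and `τ^h_0 · ω ∈ P_τ`,
then `ω ∈ P_τ`. -/
theorem stmt6 (ω : Pring) (hω : AplusInv ω) (h : tau 2 0 * ω ∈ Ptau) : ω ∈ Ptau := by
  classical
  have hPtau : Ptau = (aeval (fun p : Fin 3 × ℕ => tau p.1 p.2)).range := by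
    rw [Ptau, Algebra.adjoin_range_eq_range_aeval]
  rw [hPtau] at h ⊢
  obtain ⟨F, hF⟩ := h
  replace hF : aeval (fun p : Fin 3 × ℕ => tau p.1 p.2) F = tau 2 0 * ω := hF
  have hker : aeval xv (sigma F) = 0 := by
    have h1 := psi_aeval_T F
    rw [hF, map_mul, show psi (tau 2 0) = 0 from by simpa using psi_tau2 0, zero_mul] at h1
    exact h1.symm
  have hs0 : sigma F = 0 := by
    rw [aeval_xv_eq] at hker
    exact (map_eq_zero_iff _ (IsFractionRing.injective (MvPolynomial (Fin 3 × ℕ) ℂ) KK)).1 hker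
  obtain ⟨G, hG⟩ := X_dvd_sub_sigma F
  rw [hs0, sub_zero] at hG
  have hFG : aeval (fun p : Fin 3 × ℕ => tau p.1 p.2) F
      = tau 2 0 * aeval (fun p : Fin 3 × ℕ => tau p.1 p.2) G := by
    rw [hG, map_mul, aeval_X]
  rw [hF] at hFG
  exact ⟨G, (mul_left_cancel₀ tau20_ne hFG).symm⟩
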